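/- Pivoting preserves cut-rank: if G is a simple graph and e = uv is an edge of G, then for every X ⊆ V(G), ρ_{G×e}(X) = ρ_G(X). -/

import Mathlib

open Set

variable {α : Type*} {V : Type*}

/-- An (unbundled) connectivity-system candidate: a ground set together with a
connectivity function on its subsets. -/
structure PreSys (α : Type*) where
  E : Set α
  lam : Set α → ℕ

/-- `K` is a connectivity system: the ground set is finite and the connectivity
function is symmetric and submodular on subsets of the ground set. -/
def PreSys.IsConnSys (K : PreSys α) : Prop :=
  K.E.Finite ∧
  (∀ X ⊆ K.E, K.lam X = K.lam (K.E \ X)) ∧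
  (∀ X ⊆ K.E, ∀ Y ⊆ K.E, K.lam (X ∩ Y) + K.lam (X ∪ Y) ≤ K.lam X + K.lam Y)

/-- A tangle of order `k` in a connectivity system. -/
def IsTangle (K : PreSys α) (k : ℕ) (T : Set (Set α)) : Prop :=
  (∀ A ∈ T, A ⊆ K.E ∧ K.lam A < k) ∧
  (∀ A ⊆ K.E, K.lam A < k → (A ∈ T ↔ (K.E \ A) ∉ T)) ∧
  (∀ A ∈ T, ∀ B ∈ T, ∀ C ∈ T, A ∪ B ∪ C ≠ K.E) ∧
  (∀ A ∈ T, A.ncard ≠ K.E.ncard - 1)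

/-- `K` dominates `K₀`. -/
def Dominates (K K₀ : PreSys α) : Prop :=
  K₀.E ⊆ K.E ∧ ∀ X ⊆ K₀.E, K₀.lam X ≤ K.lam X

/-- The collection of subsets of `K.E` of `K`-connectivity `< k` whose trace on
`K₀.E` lies in `T₀`; when `K` dominates `K₀` and `T₀` is a tangle, this is the
tangle induced by `T₀` in `K`. -/
def InducedTangle (K K₀ : PreSys α) (k : ℕ) (T₀ : Set (Set α)) : Set (Set α) :=
  {X | X ⊆ K.E ∧ K.lam X < k ∧ X ∩ K₀.E ∈ T₀}

/-- `K₀` adheres to `K`. -/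
def Adheres (K₀ K : PreSys α) : Prop :=
  Dominates K K₀ ∧
  ∀ A B : Set α, A ∪ B = K₀.E → Disjoint A B →
    ∃ X₁ X₂ : Set α, Disjoint X₁ X₂ ∧ (X₁ ∪ X₂ = A ∨ X₁ ∪ X₂ = B) ∧
      K.lam X₁ ≤ K₀.lam A ∧ K.lam X₂ ≤ K₀.lam A

/-- The tangle `T` of order `k` in `K` splits in `K₀`: two distinct tangles of
order `k` in `K₀` both induce `T`. -/
def Splits (K K₀ : PreSys α) (k : ℕ) (T : Set (Set α)) : Prop :=
  ∃ T₁ T₂ : Set (Set α), T₁ ≠ T₂ ∧ IsTangle K₀ k T₁ ∧ IsTangle K₀ k T₂ ∧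
    InducedTangle K K₀ k T₁ = T ∧ InducedTangle K K₀ k T₂ = T

/-- `K` is `k`-entangled: for each `t ≤ k` there is at most one tangle of order `t`. -/
def Entangled (K : PreSys α) (k : ℕ) : Prop :=
  ∀ t ≤ k, ∀ T₁ T₂ : Set (Set α), IsTangle K t T₁ → IsTangle K t T₂ → T₁ = T₂

/-! ### Matroids -/

/-- The rank of a set in a matroid: the largest cardinality of an independent
subset of `X`. -/
noncomputable def mrank (M : Matroid α) (X : Set α) : ℕ :=
  sSup {n | ∃ I, M.Indep I ∧ I ⊆ X ∧ I.ncard = n}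

/-- The connectivity function `λ_M(X) = r(X) + r(E \ X) - r(M) + 1` of a matroid. -/
noncomputable def lamM (M : Matroid α) (X : Set α) : ℕ :=
  mrank M X + mrank M (M.E \ X) - mrank M M.E + 1

/-- The connectivity function of the deletion `M \ e`, expressed via the rank
function of `M` (for `X ⊆ E(M) \ {e}` one has `r_{M\e}(X) = r_M(X)`). -/
noncomputable def lamDel (M : Matroid α) (e : α) (X : Set α) : ℕ :=
  mrank M X + mrank M ((M.E \ {e}) \ X) - mrank M (M.E \ {e}) + 1

/-- The connectivity function of the contraction `M / e`, expressed via the rank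
function of `M` (for `Y ⊆ E(M) \ {e}` one has `r_{M/e}(Y) = r_M(Y ∪ {e}) - r_M({e})`,
and `r(M/e) = r(M) - r_M({e})`). -/
noncomputable def lamCon (M : Matroid α) (e : α) (X : Set α) : ℕ :=
  mrank M (X ∪ {e}) + mrank M (((M.E \ {e}) \ X) ∪ {e}) - mrank M {e} - mrank M M.E + 1

/-- The connectivity system `K(M)` of a matroid `M`. -/
noncomputable def KM (M : Matroid α) : PreSys α := ⟨M.E, lamM M⟩

/-- The connectivity system `K(M \ e)`. -/
noncomputable def KDel (M : Matroid α) (e : α) : PreSys α := ⟨M.E \ {e}, lamDel M e⟩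

/-- The connectivity system `K(M / e)`. -/
noncomputable def KCon (M : Matroid α) (e : α) : PreSys α := ⟨M.E \ {e}, lamCon M e⟩

/-! ### Graphs, cut-rank and pivoting -/

/-- The cut-rank, relative to a ground set `S` of vertices, of a set `X`:
the GF(2)-rank of the adjacency submatrix with rows `X ∩ S` and columns `S \ X`.
For an induced subgraph of `G` on `S` this is its cut-rank function. -/
noncomputable def cutRankOn (G : SimpleGraph V) [Fintype V] (S X : Set V) : ℕ :=
  letI : Fintype ↥(X ∩ S) := (Set.toFinite _).fintype
  letI : Fintype ↥(S \ X) := (Set.toFinite _).fintype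
  letI : DecidableRel G.Adj := Classical.decRel _
  Matrix.rank (Matrix.of fun (a : ↥(X ∩ S)) (b : ↥(S \ X)) =>
    if G.Adj a.1 b.1 then (1 : ZMod 2) else 0)

/-- The cut-rank function `ρ_G` of a graph `G`. -/
noncomputable def cutRank (G : SimpleGraph V) [Fintype V] (X : Set V) : ℕ :=
  cutRankOn G Set.univ X

/-- Local complementation at a vertex `v`: adjacency among the neighbours of `v`
is complemented. -/
def localComp (G : SimpleGraph V) (v : V) : SimpleGraph V where
  Adj a b := a ≠ b ∧
    ((G.Adj v a ∧ G.Adj v b ∧ ¬ G.Adj a b) ∨ (¬ (G.Adj v a ∧ G.Adj v b) ∧ G.Adj a b))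
  symm := by
    refine ⟨fun a b h => ?_⟩
    obtain ⟨hab, h⟩ := h
    refine ⟨hab.symm, ?_⟩
    rcases h with ⟨h1, h2, h3⟩ | ⟨h1, h2⟩
    · exact Or.inl ⟨h2, h1, fun h => h3 h.symm⟩
    · exact Or.inr ⟨fun h => h1 ⟨h.2, h.1⟩, h2.symm⟩
  loopless := ⟨fun a h => h.1 rfl⟩

/-- The pivot `G × e` on an edge `e = uv`, defined as `G * u * v * u` where `*`
denotes local complementation. -/
def pivot (G : SimpleGraph V) (u v : V) : SimpleGraph V :=
  localComp (localComp (localComp G u) v) u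

/-- The connectivity system `CR(G) = (V(G), ρ_G)`. -/
noncomputable def CR (G : SimpleGraph V) [Fintype V] : PreSys V :=
  ⟨Set.univ, cutRank G⟩

/-- The connectivity system `CR(G - v)` of the graph obtained by deleting the
vertex `v`: ground set `V \ {v}` with the cut-rank computed inside `V \ {v}`. -/
noncomputable def CRdel (G : SimpleGraph V) [Fintype V] (v : V) : PreSys V :=
  ⟨{v}ᶜ, cutRankOn G {v}ᶜ⟩

/-! ### Partial branch-decompositions -/

/-- A partial branch-decomposition of a connectivity system `K`: a cubic tree
(each vertex of degree 1 or 3) together with a map from the ground set to the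
leaves of the tree. -/
structure PBD (K : PreSys α) (V : Type*) where
  tree : SimpleGraph V
  isTree : tree.IsTree
  cubic : ∀ x : V, (tree.neighborSet x).ncard = 1 ∨ (tree.neighborSet x).ncard = 3
  f : α → V
  maps : ∀ a ∈ K.E, (tree.neighborSet (f a)).ncard = 1

/-- A leaf of the cubic tree of a partial branch-decomposition. -/
def PBD.IsLeaf {K : PreSys α} (D : PBD K V) (x : V) : Prop :=
  (D.tree.neighborSet x).ncard = 1

/-- The side of the edge `uw` of the tree `tr` towards `u`: the elements of the
ground set mapped by `f` into the component of `tr - uw` containing `u`. -/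
def edgeSide (K : PreSys α) (tr : SimpleGraph V) (f : α → V) (u w : V) : Set α :=
  {a | a ∈ K.E ∧ (tr.deleteEdges {s(u, w)}).Reachable (f a) u}

/-- The partial branch-decomposition data `(tr, f)` has width at most `t`:
every edge of the tree induces a partition whose sides have connectivity at most `t`. -/
def widthLE (K : PreSys α) (tr : SimpleGraph V) (f : α → V) (t : ℕ) : Prop :=
  ∀ u w : V, tr.Adj u w → K.lam (edgeSide K tr f u w) ≤ t

/-- The set displayed by the vertex `x`: the elements of the ground set mapped to `x`. -/
def display (K : PreSys α) (f : α → V) (x : V) : Set α :=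
  {a | a ∈ K.E ∧ f a = x}

/-- `X` is weakly `t`-branched: `λ(X) ≤ t` and there is a partial
branch-decomposition of width at most `t` in which every leaf displays a subset
of `E \ X` or a singleton. -/
def WeaklyBranched (K : PreSys α) (X : Set α) (t : ℕ) : Prop :=
  K.lam X ≤ t ∧
    ∃ (V : Type) (_ : Fintype V) (D : PBD K V), widthLE K D.tree D.f t ∧
      ∀ x : V, D.IsLeaf x →
        (display K D.f x ⊆ K.E \ X ∨ ∃ a : α, display K D.f x = {a})

/-- `X` is `t`-branched: there is a partial branch-decomposition of width at most
`t` in which some leaf displays `E \ X` and every other leaf displays at most one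
element of `X`. -/
def Branched (K : PreSys α) (X : Set α) (t : ℕ) : Prop :=
  ∃ (V : Type) (_ : Fintype V) (D : PBD K V), widthLE K D.tree D.f t ∧
    ∃ r : V, D.IsLeaf r ∧ display K D.f r = K.E \ X ∧
      ∀ x : V, D.IsLeaf x → x ≠ r → (display K D.f x ∩ X).ncard ≤ 1

/-- `κ_K(X, Y)`: the minimum connectivity of a set `Z` with `X ⊆ Z ⊆ E \ Y`. -/
noncomputable def kappa (K : PreSys α) (X Y : Set α) : ℕ :=
  sInf {n | ∃ Z : Set α, X ⊆ Z ∧ Z ⊆ K.E \ Y ∧ K.lam Z = n}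

/-!
Over GF(2), local complementation at `w` replaces the adjacency matrix `A` by
`A + A E A` off the diagonal, with `E` the matrix unit at `(w, w)`. On the cut `X × (V \ X)`
this adds to every row a multiple of row `w` when `w ∈ X`, and to every column a multiple of
column `w` otherwise; as `w` is not adjacent to itself, row (column) `w` is left unchanged, so
this is an invertible elementary operation and the rank is preserved. A pivot is a composite of
three local complementations.
-/

open Matrix

namespace Matrix

variable {m n R : Type*} [Fintype n] [CommRing R]

theorem det_one_add_vecMulVec [DecidableEq n] (u v : n → R) :
    (1 + vecMulVec u v).det = 1 + v ⬝ᵥ u := by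
  rw [vecMulVec_eq Unit, det_one_add_replicateCol_mul_replicateRow]

theorem rank_add_vecMulVec_row [Fintype m] [DecidableEq m] (B : Matrix m n R) (c : m → R)
    {w : m} (hc : c w = 0) : (B + vecMulVec c (B w)).rank = B.rank := by
  have hdet : IsUnit (1 + vecMulVec c (Pi.single w 1)).det := by
    simp [det_one_add_vecMulVec, hc]
  rw [← rank_mul_eq_right_of_isUnit_det _ B hdet, Matrix.add_mul, Matrix.one_mul, vecMulVec_mul,
    single_one_vecMul]
  rfl

theorem rank_add_vecMulVec_col [DecidableEq n] (B : Matrix m n R) (d : n → R) {w : n}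
    (hd : d w = 0) : (B + vecMulVec (fun a => B a w) d).rank = B.rank := by
  have hdet : IsUnit (1 + vecMulVec (Pi.single w 1) d).det := by
    simp [det_one_add_vecMulVec, hd]
  rw [← rank_mul_eq_left_of_isUnit_det _ B hdet, Matrix.mul_add, Matrix.mul_one, mul_vecMulVec,
    mulVec_single_one]
  rfl

end Matrix

theorem ite_localComp_adj_eq {V : Type*} (G : SimpleGraph V) (w : V) {a b : V} (hab : a ≠ b)
    [DecidableRel G.Adj] [DecidableRel (localComp G w).Adj] :
    (if (localComp G w).Adj a b then (1 : ZMod 2) else 0) =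
      (if G.Adj a b then 1 else 0) + (if G.Adj a w then 1 else 0) * (if G.Adj w b then 1 else 0) := by
  by_cases hwa : G.Adj w a <;> by_cases hwb : G.Adj w b <;> by_cases hab' : G.Adj a b <;>
    simp [localComp, hab, hwa, hwb, hab', G.adj_comm a w]; decide

theorem cutRank_localComp {V : Type*} [Fintype V] (G : SimpleGraph V) (w : V) (X : Set V) :
    cutRank (localComp G w) X = cutRank G X := by
  classical
  unfold cutRank cutRankOn
  -- the `Fintype` instances of `cutRankOn`, so that `calc` compares ranks syntactically
  letI : Fintype ↥(X ∩ univ) := (toFinite _).fintype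
  letI : Fintype ↥(univ \ X) := (toFinite _).fintype
  set B : Matrix ↥(X ∩ univ) ↥(univ \ X) (ZMod 2) :=
    Matrix.of fun a b => if G.Adj a.1 b.1 then 1 else 0
  set r : ↥(X ∩ univ) → ZMod 2 := fun a => if G.Adj a.1 w then 1 else 0
  set c : ↥(univ \ X) → ZMod 2 := fun b => if G.Adj w b.1 then 1 else 0
  calc _ = (B + vecMulVec r c).rank := by
        congr 1
        ext a b
        exact ite_localComp_adj_eq G w (ne_of_mem_of_not_mem a.2.1 b.2.2)
    _ = B.rank := by
        by_cases hw : w ∈ X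
        · exact rank_add_vecMulVec_row B r (w := ⟨w, hw, trivial⟩) (by simp [r])
        · exact rank_add_vecMulVec_col B c (w := ⟨w, trivial, hw⟩) (by simp [c])

theorem stmt19_general {V : Type*} [Fintype V] (G : SimpleGraph V) (u v : V) (X : Set V) :
    cutRank (pivot G u v) X = cutRank G X := by
  simp only [pivot, cutRank_localComp]

/-- Pivoting on an edge `e = uv` preserves the cut-rank: for every
`X ⊆ V(G)`, `ρ_{G×e}(X) = ρ_G(X)`. -/
theorem stmt19 {V : Type*} [Fintype V] (G : SimpleGraph V) (u v : V)
    (he : G.Adj u v) (X : Set V) :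
    cutRank (pivot G u v) X = cutRank G X :=
  stmt19_general G u v X
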